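/- Let W and W′ be normalized compatibility witnesses with D_W ≠ ∅. Then W′ is finer than W if and only if there exist ε ∈ [0, 1) and a tuple P ∈ O with ⟨⟨P, σ⟩⟩ ≥ 0 for every positive tuple σ, such that W = (1−ε)·W′ + ε·P. -/

import Mathlib

open Matrix BigOperators
open scoped ComplexOrder

namespace Compat

noncomputable section

variable {n : ℕ} (d : Fin n → ℕ)

/-- The index type of the full tensor product `H = H_1 ⊗ ⋯ ⊗ H_n`,
where `H_i = ℂ^{d i}`; operators on `H` are matrices indexed by `Idx d`. -/
abbrev Idx : Type := ∀ i, Fin (d i)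

/-- The index type of the tensor product of the factors `H_i` with `i ∈ A`. -/
abbrev SubIdx (A : Finset (Fin n)) : Type := ∀ i : A, Fin (d i.1)

/-- Combine an assignment on `B` and one on `Bᶜ` into a full assignment. -/
def glue (B : Finset (Fin n)) (x : SubIdx d B) (z : SubIdx d Bᶜ) : Idx d :=
  fun i => if h : i ∈ B then x ⟨i, h⟩ else z ⟨i, Finset.mem_compl.mpr h⟩

/-- Partial trace keeping the factors in `B` (i.e. tracing out the factors in `Bᶜ`). -/
def reduce (B : Finset (Fin n)) (M : Matrix (Idx d) (Idx d) ℂ) :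
    Matrix (SubIdx d B) (SubIdx d B) ℂ :=
  fun x y => ∑ z : SubIdx d Bᶜ, M (glue d B x z) (glue d B y z)

/-- Place an operator acting on the factors in `B`, tensored with the identity
on the remaining factors, as an operator on the full space `H`. -/
def embed (B : Finset (Fin n)) (W : Matrix (SubIdx d B) (SubIdx d B) ℂ) :
    Matrix (Idx d) (Idx d) ℂ :=
  fun x y =>
    if ∀ i ∈ Bᶜ, x i = y i then W (fun i => x i.1) (fun i => y i.1) else 0

/-- Index type for `H^(i) = ⊗_{j ≠ i} H_j`. -/
abbrev RedIdx (i : Fin n) := SubIdx d ({i}ᶜ)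

/-- The space `O` of `n`-tuples of operators, the `i`-th acting on `H^(i)`. -/
abbrev Tuple := ∀ i : Fin n, Matrix (RedIdx d i) (RedIdx d i) ℂ

/-- Membership in (the Hermitian tuples space) `O`: every component is Hermitian. -/
def IsHermTuple (W : Tuple d) : Prop := ∀ i, (W i).IsHermitian

/-- A density state: positive semidefinite with trace one. -/
def IsDensity {m : Type*} [Fintype m] (M : Matrix m m ℂ) : Prop :=
  M.PosSemidef ∧ M.trace = 1

/-- The set `C`: a tuple `σ` lies in `C` iff there is a density state `ρ` on the
full space whose one-system partial traces are the `σ i`. -/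
def MemC (σ : Tuple d) : Prop :=
  ∃ ρ : Matrix (Idx d) (Idx d) ℂ, IsDensity ρ ∧ ∀ i, σ i = reduce d ({i}ᶜ) ρ

/-- The inner product `⟨⟨A,B⟩⟩ = Σ_i Tr(A_i B_i)` on `O` (a real number, since the
traces are real for Hermitian tuples). -/
def cwip (A B : Tuple d) : ℝ := (∑ i, ((A i) * (B i)).trace).re

/-- A compatibility witness: an element of `O` pairing nonnegatively with all of `C`. -/
def IsWitness (W : Tuple d) : Prop :=
  IsHermTuple d W ∧ ∀ ρ, MemC d ρ → 0 ≤ cwip d W ρ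

/-- `p(W) = Σ_i W_i ⊗ 1_i`. -/
def pW (W : Tuple d) : Matrix (Idx d) (Idx d) ℂ :=
  ∑ i, embed d ({i}ᶜ) (W i)

/-- `Δ(Z) = Σ_{A ⊊ N} (−1)^{|A|} (Tr_{N∖A} Z) ⊗ 1_{N∖A}`. -/
def Δop (Z : Matrix (Idx d) (Idx d) ℂ) : Matrix (Idx d) (Idx d) ℂ :=
  ∑ A ∈ Finset.univ.filter (fun A : Finset (Fin n) => A ≠ Finset.univ),
    ((-1 : ℂ) ^ A.card) • embed d A (reduce d A Z)

/-- The tensor product `T_1 ⊗ ⋯ ⊗ T_n` of one-system operators. -/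
def tensorAll (T : ∀ i, Matrix (Fin (d i)) (Fin (d i)) ℂ) :
    Matrix (Idx d) (Idx d) ℂ :=
  fun x y => ∏ i, T i (x i) (y i)

/-- Partial trace from the factors in `B` down to the factors in `B'` (for `B' ⊆ B`). -/
def reduceSub (B B' : Finset (Fin n)) (M : Matrix (SubIdx d B) (SubIdx d B) ℂ) :
    Matrix (SubIdx d B') (SubIdx d B') ℂ :=
  fun x y => ∑ z : SubIdx d (B \ B'),
    M (fun i => if h : i.1 ∈ B' then x ⟨i.1, h⟩ else z ⟨i.1, Finset.mem_sdiff.mpr ⟨i.2, h⟩⟩)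
      (fun i => if h : i.1 ∈ B' then y ⟨i.1, h⟩ else z ⟨i.1, Finset.mem_sdiff.mpr ⟨i.2, h⟩⟩)

/-- A tuple of subsystem states has consistent overlapping partial traces if
tracing the `j`-factor out of `σ_i` agrees with tracing the `i`-factor out of `σ_j`. -/
def HasConsistentTraces (σ : Tuple d) : Prop :=
  ∀ i j : Fin n, i ≠ j →
    reduceSub d ({i}ᶜ) ({i}ᶜ ∩ {j}ᶜ) (σ i) = reduceSub d ({j}ᶜ) ({i}ᶜ ∩ {j}ᶜ) (σ j)

/-- The tuple `I` of reduced states of the maximally mixed state `1_H / D`. -/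
def Itup : Tuple d :=
  fun i => ((d i : ℂ) / (∏ k, (d k : ℂ))) • (1 : Matrix (RedIdx d i) (RedIdx d i) ℂ)

/-- A positive tuple: all components positive semidefinite. -/
def PosTuple (σ : Tuple d) : Prop := ∀ i, (σ i).PosSemidef

/-- A normalized witness: `⟨⟨W, I⟩⟩ = 1` (equivalently `Tr p(W) = 1`). -/
def Normalized (W : Tuple d) : Prop := cwip d W (Itup d) = 1

/-- `W'` is finer than `W`. -/
def Finer (W' W : Tuple d) : Prop :=
  ∀ σ, PosTuple d σ → cwip d W σ < 0 → cwip d W' σ < 0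

/-- `λ(W, W') = inf_{σ ∈ D_W} |⟨⟨W',σ⟩⟩| / |⟨⟨W,σ⟩⟩|`. -/
def lam (W W' : Tuple d) : ℝ :=
  sInf {t | ∃ σ, PosTuple d σ ∧ cwip d W σ < 0 ∧ t = |cwip d W' σ| / |cwip d W σ|}

end
end Compat

open Matrix BigOperators
open scoped ComplexOrder

section Helpers

noncomputable section

variable {n : ℕ} {d : Fin n → ℕ}

private lemma smul_trace_re (r : ℝ) (z : ℂ) : (r • z).re = r * z.re := by
  rw [Complex.real_smul, Complex.re_ofReal_mul]

lemma cwip_left_combo (r s : ℝ) (A B C : Compat.Tuple d) :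
    Compat.cwip d (fun i => r • A i + s • B i) C
      = r * Compat.cwip d A C + s * Compat.cwip d B C := by
  unfold Compat.cwip
  have h : ∀ i : Fin n, ((r • A i + s • B i) * C i).trace
      = r • (A i * C i).trace + s • (B i * C i).trace := by
    intro i
    rw [Matrix.add_mul, Matrix.smul_mul, Matrix.smul_mul, Matrix.trace_add,
      Matrix.trace_smul, Matrix.trace_smul]
  rw [Finset.sum_congr rfl fun i _ => h i, Finset.sum_add_distrib, ← Finset.smul_sum,
    ← Finset.smul_sum, Complex.add_re, smul_trace_re, smul_trace_re]

lemma cwip_right_combo (r s : ℝ) (A B C : Compat.Tuple d) :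
    Compat.cwip d A (fun i => r • B i + s • C i)
      = r * Compat.cwip d A B + s * Compat.cwip d A C := by
  unfold Compat.cwip
  have h : ∀ i : Fin n, (A i * (r • B i + s • C i)).trace
      = r • (A i * B i).trace + s • (A i * C i).trace := by
    intro i
    rw [Matrix.mul_add, Matrix.mul_smul, Matrix.mul_smul, Matrix.trace_add,
      Matrix.trace_smul, Matrix.trace_smul]
  rw [Finset.sum_congr rfl fun i _ => h i, Finset.sum_add_distrib, ← Finset.smul_sum,
    ← Finset.smul_sum, Complex.add_re, smul_trace_re, smul_trace_re]

lemma cwip_zero_left (C : Compat.Tuple d) :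
    Compat.cwip d (fun i => (0 : Matrix (Compat.RedIdx d i) (Compat.RedIdx d i) ℂ)) C = 0 := by
  unfold Compat.cwip
  simp [Matrix.zero_mul]

lemma isHermitian_real_smul (r : ℝ) {m : Type*} {M : Matrix m m ℂ} (h : M.IsHermitian) :
    (r • M).IsHermitian := by
  show (r • M)ᴴ = r • M
  rw [Matrix.conjTranspose_smul, star_trivial, h.eq]

lemma posSemidef_real_smul {m : Type*} [Fintype m] {M : Matrix m m ℂ} (hM : M.PosSemidef)
    {r : ℝ} (hr : 0 ≤ r) : (r • M).PosSemidef := by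
  refine Matrix.PosSemidef.of_dotProduct_mulVec_nonneg (isHermitian_real_smul r hM.1) fun x => ?_
  rw [Matrix.smul_mulVec, dotProduct_smul, Complex.real_smul]
  exact mul_nonneg (Complex.zero_le_real.mpr hr) (hM.dotProduct_mulVec_nonneg x)

lemma posTuple_Itup (hd : ∀ i, 1 ≤ d i) : Compat.PosTuple d (Compat.Itup d) := by
  intro i
  have h : Compat.Itup d i
      = (((d i : ℝ) / ∏ k, (d k : ℝ) : ℝ) : ℂ) • (1 : Matrix (Compat.RedIdx d i) (Compat.RedIdx d i) ℂ) := by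
    unfold Compat.Itup
    congr 1
    push_cast
    ring
  have h2 : (((d i : ℝ) / ∏ k, (d k : ℝ) : ℝ) : ℂ) • (1 : Matrix (Compat.RedIdx d i) (Compat.RedIdx d i) ℂ)
      = ((d i : ℝ) / ∏ k, (d k : ℝ) : ℝ) • (1 : Matrix (Compat.RedIdx d i) (Compat.RedIdx d i) ℂ) := by
    ext a b
    simp [Complex.real_smul]
  rw [h, h2]
  refine posSemidef_real_smul Matrix.PosSemidef.one ?_
  exact div_nonneg (Nat.cast_nonneg _) (Finset.prod_nonneg fun k _ => Nat.cast_nonneg _)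

lemma cwip_self_eq (A : Compat.Tuple d) (hA : Compat.IsHermTuple d A) :
    Compat.cwip d A A = ∑ i, ∑ j, ∑ k, Complex.normSq (A i j k) := by
  unfold Compat.cwip
  have h : ∀ i : Fin n, (A i * A i).trace = ((∑ j, ∑ k, Complex.normSq (A i j k) : ℝ) : ℂ) := by
    intro i
    have e1 : (A i * A i).trace = ∑ j, (A i * A i) j j := rfl
    rw [e1]
    have e5 : ∀ j, (A i * A i) j j = ∑ k, ((Complex.normSq (A i j k) : ℝ) : ℂ) := by
      intro j
      rw [Matrix.mul_apply]
      refine Finset.sum_congr rfl fun k _ => ?_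
      have e2 : A i k j = starRingEnd ℂ (A i j k) := by
        have e3 := (hA i).apply j k
        calc A i k j = star (star (A i k j)) := (star_star _).symm
          _ = star (A i j k) := by rw [e3]
          _ = starRingEnd ℂ (A i j k) := rfl
      rw [e2, Complex.mul_conj]
    rw [Finset.sum_congr rfl fun j _ => e5 j]
    norm_cast
  rw [Finset.sum_congr rfl fun i _ => h i, ← Complex.ofReal_sum, Complex.ofReal_re]

lemma cwip_self_nonneg (A : Compat.Tuple d) (hA : Compat.IsHermTuple d A) :
    0 ≤ Compat.cwip d A A := by
  rw [cwip_self_eq A hA]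
  exact Finset.sum_nonneg fun i _ => Finset.sum_nonneg fun j _ =>
    Finset.sum_nonneg fun k _ => Complex.normSq_nonneg _

lemma eq_zero_of_cwip_self (A : Compat.Tuple d) (hA : Compat.IsHermTuple d A)
    (h : Compat.cwip d A A = 0) : ∀ i, A i = 0 := by
  rw [cwip_self_eq A hA] at h
  intro i
  ext j k
  have h1 : ∀ i ∈ Finset.univ, (0:ℝ) ≤ ∑ j, ∑ k, Complex.normSq (A i j k) := fun i _ =>
    Finset.sum_nonneg fun j _ => Finset.sum_nonneg fun k _ => Complex.normSq_nonneg _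
  have h2 := (Finset.sum_eq_zero_iff_of_nonneg h1).mp h i (Finset.mem_univ i)
  have h3 := (Finset.sum_eq_zero_iff_of_nonneg
    (fun j _ => Finset.sum_nonneg fun k _ => Complex.normSq_nonneg _)).mp h2 j (Finset.mem_univ j)
  have h4 := (Finset.sum_eq_zero_iff_of_nonneg
    (fun k _ => Complex.normSq_nonneg _)).mp h3 k (Finset.mem_univ k)
  simpa [Matrix.zero_apply] using Complex.normSq_eq_zero.mp h4

lemma pert {m : Type*} [Fintype m] [DecidableEq m] {A : Matrix m m ℂ}
    (hA : A.IsHermitian) {α : ℝ} (hα : 0 < α) :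
    ∃ t : ℝ, 0 < t ∧ ∀ s : ℝ, |s| ≤ t →
      (((α : ℂ) • (1 : Matrix m m ℂ)) + s • A).PosSemidef := by
  classical
  set C : ℝ := ∑ i : m, ∑ j : m, ‖A i j‖ with hCdef
  have hC0 : 0 ≤ C :=
    Finset.sum_nonneg fun i _ => Finset.sum_nonneg fun j _ => norm_nonneg _
  refine ⟨α / (C + 1), by positivity, fun s hs => ?_⟩
  have hherm : (((α : ℂ) • (1 : Matrix m m ℂ)) + s • A).IsHermitian := by
    apply Matrix.IsHermitian.add
    · show ((α : ℂ) • (1 : Matrix m m ℂ))ᴴ = _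
      rw [Matrix.conjTranspose_smul, Matrix.conjTranspose_one]
      norm_num
    · exact isHermitian_real_smul s hA
  refine Matrix.PosSemidef.of_dotProduct_mulVec_nonneg hherm fun x => ?_
  set S : ℝ := ∑ i, Complex.normSq (x i) with hSdef
  have hS0 : 0 ≤ S := Finset.sum_nonneg fun i _ => Complex.normSq_nonneg _
  have hSdot : star x ⬝ᵥ x = (S : ℂ) := by
    have e : star x ⬝ᵥ x = ∑ i, ((Complex.normSq (x i) : ℝ) : ℂ) := by
      show (∑ i, (star x) i * x i) = _
      refine Finset.sum_congr rfl fun i _ => ?_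
      show starRingEnd ℂ (x i) * x i = _
      rw [← Complex.normSq_eq_conj_mul_self]
    rw [e, hSdef, Complex.ofReal_sum]
  set q : ℂ := star x ⬝ᵥ (A *ᵥ x) with hqdef
  have hq_conj : starRingEnd ℂ q = q := by
    calc starRingEnd ℂ q = star q := rfl
      _ = star (A *ᵥ x) ⬝ᵥ x := (star_dotProduct (A *ᵥ x) x).symm
      _ = (star x ᵥ* Aᴴ) ⬝ᵥ x := by rw [Matrix.star_mulVec]
      _ = star x ⬝ᵥ (Aᴴ *ᵥ x) := (Matrix.dotProduct_mulVec _ _ _).symm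
      _ = q := by rw [hA.eq]
  have hq_im : q.im = 0 := Complex.conj_eq_iff_im.mp hq_conj
  have hxx : ∀ i j : m, ‖x i‖ * ‖x j‖ ≤ S := by
    intro i j
    have h1 : ‖x i‖ ^ 2 ≤ S := by
      rw [Complex.sq_norm]
      exact Finset.single_le_sum (fun k _ => Complex.normSq_nonneg (x k)) (Finset.mem_univ i)
    have h2 : ‖x j‖ ^ 2 ≤ S := by
      rw [Complex.sq_norm]
      exact Finset.single_le_sum (fun k _ => Complex.normSq_nonneg (x k)) (Finset.mem_univ j)
    nlinarith [norm_nonneg (x i), norm_nonneg (x j)]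
  have hq_abs : ‖q‖ ≤ C * S := by
    have hqsum : q = ∑ i, (star x) i * (A *ᵥ x) i := rfl
    rw [hqsum]
    calc ‖∑ i, (star x) i * (A *ᵥ x) i‖
        ≤ ∑ i, ‖(star x) i * (A *ᵥ x) i‖ := norm_sum_le _ _
      _ ≤ ∑ i, ∑ j, ‖A i j‖ * S := by
          refine Finset.sum_le_sum fun i _ => ?_
          have e1 : (star x) i = starRingEnd ℂ (x i) := rfl
          have e2 : (A *ᵥ x) i = ∑ j, A i j * x j := rfl
          rw [e1, e2, norm_mul, Complex.norm_conj]
          calc ‖x i‖ * ‖∑ j, A i j * x j‖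
              ≤ ‖x i‖ * ∑ j, ‖A i j * x j‖ :=
                mul_le_mul_of_nonneg_left (norm_sum_le _ _) (norm_nonneg _)
            _ = ∑ j, ‖A i j‖ * (‖x i‖ * ‖x j‖) := by
                rw [Finset.mul_sum]
                refine Finset.sum_congr rfl fun j _ => ?_
                rw [norm_mul]
                ring
            _ ≤ ∑ j, ‖A i j‖ * S :=
                Finset.sum_le_sum fun j _ =>
                  mul_le_mul_of_nonneg_left (hxx i j) (norm_nonneg _)
      _ = C * S := by rw [hCdef, Finset.sum_mul]; exact Finset.sum_congr rfl fun i _ => (Finset.sum_mul _ _ _).symm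
  have hval : star x ⬝ᵥ ((((α : ℂ) • (1 : Matrix m m ℂ)) + s • A) *ᵥ x)
      = (α : ℂ) * (S : ℂ) + (s : ℂ) * q := by
    rw [Matrix.add_mulVec, dotProduct_add, Matrix.smul_mulVec,
      Matrix.smul_mulVec, Matrix.one_mulVec, dotProduct_smul,
      dotProduct_smul, hSdot, smul_eq_mul, ← hqdef, Complex.real_smul]
  rw [hval, Complex.le_def]
  constructor
  · simp only [Complex.add_re, Complex.mul_re, Complex.ofReal_re, Complex.ofReal_im,
      Complex.zero_re, hq_im, mul_zero, zero_mul, sub_zero]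
    have h1 : |q.re| ≤ C * S := le_trans (Complex.abs_re_le_norm q) hq_abs
    have h2 : |s * q.re| ≤ α / (C + 1) * (C * S) := by
      rw [abs_mul]
      exact mul_le_mul hs h1 (abs_nonneg _) (by positivity)
    have h3 : α / (C + 1) * (C * S) ≤ α * S := by
      rw [div_mul_eq_mul_div, div_le_iff₀ (by positivity : (0:ℝ) < C + 1)]
      nlinarith
    have h4 := neg_abs_le (s * q.re)
    linarith
  · simp [Complex.add_im, Complex.mul_im, hq_im, Complex.ofReal_im, Complex.ofReal_re]

lemma pert_tuple (hn0 : 0 < n) (hd : ∀ i, 1 ≤ d i) (X : Compat.Tuple d)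
    (hX : Compat.IsHermTuple d X) :
    ∃ t : ℝ, 0 < t ∧ ∀ s : ℝ, |s| ≤ t →
      Compat.PosTuple d (fun i => (1:ℝ) • Compat.Itup d i + s • X i) := by
  have hprod : (0:ℝ) < ∏ k, (d k : ℝ) :=
    Finset.prod_pos fun k _ => by exact_mod_cast Nat.lt_of_lt_of_le Nat.zero_lt_one (hd k)
  have key : ∀ i : Fin n, ∃ t : ℝ, 0 < t ∧ ∀ s : ℝ, |s| ≤ t →
      ((1:ℝ) • Compat.Itup d i + s • X i).PosSemidef := by
    intro i
    have hα0 : 0 < (d i : ℝ) / ∏ k, (d k : ℝ) := by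
      apply div_pos _ hprod
      exact_mod_cast Nat.lt_of_lt_of_le Nat.zero_lt_one (hd i)
    obtain ⟨t, ht0, ht⟩ := pert (hX i) hα0
    refine ⟨t, ht0, fun s hs => ?_⟩
    have hIeq : (1:ℝ) • Compat.Itup d i
        = ((((d i : ℝ) / ∏ k, (d k : ℝ) : ℝ)) : ℂ) • (1 : Matrix (Compat.RedIdx d i) (Compat.RedIdx d i) ℂ) := by
      rw [one_smul]
      unfold Compat.Itup
      congr 1
      push_cast
      ring
    rw [hIeq]
    exact ht s hs
  choose t ht0 ht using key
  have hne : (Finset.univ : Finset (Fin n)).Nonempty := ⟨⟨0, hn0⟩, Finset.mem_univ _⟩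
  refine ⟨Finset.univ.inf' hne t, (Finset.lt_inf'_iff hne).mpr fun i _ => ht0 i, fun s hs i => ?_⟩
  exact ht i s (le_trans hs (Finset.inf'_le _ (Finset.mem_univ i)))

lemma claimA (hd : ∀ i, 1 ≤ d i) {W W' : Compat.Tuple d} (hF : Compat.Finer d W' W)
    (hnW : Compat.Normalized d W) (hnW' : Compat.Normalized d W')
    {ρ : Compat.Tuple d} (hρ : Compat.PosTuple d ρ) (hf : Compat.cwip d W ρ < 0) :
    Compat.cwip d W' ρ ≤ Compat.cwip d W ρ := by
  have hnW1 : Compat.cwip d W (Compat.Itup d) = 1 := hnW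
  have hnW'1 : Compat.cwip d W' (Compat.Itup d) = 1 := hnW'
  by_contra hcon
  push_neg at hcon
  have hg : Compat.cwip d W' ρ < 0 := hF ρ hρ hf
  set f := Compat.cwip d W ρ with hfdef
  set g := Compat.cwip d W' ρ with hgdef
  have h1f : (0:ℝ) < 1 - f := by linarith
  have h1g : (0:ℝ) < 1 - g := by linarith
  have hlt : -g / (1 - g) < -f / (1 - f) := by
    rw [div_lt_div_iff₀ h1g h1f]
    nlinarith
  set s : ℝ := (-g / (1 - g) + -f / (1 - f)) / 2 with hsdef
  have hs1 : -g / (1 - g) < s := by rw [hsdef]; linarith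
  have hs2 : s < -f / (1 - f) := by rw [hsdef]; linarith
  have hs0 : 0 < s := lt_of_le_of_lt (div_nonneg (by linarith) h1g.le) hs1
  have hsle : s < 1 := lt_trans hs2 (by rw [div_lt_one h1f]; linarith)
  have hpos : Compat.PosTuple d (fun i => (1 - s) • ρ i + s • Compat.Itup d i) :=
    fun i => ((posSemidef_real_smul (hρ i) (by linarith)).add
      (posSemidef_real_smul (posTuple_Itup hd i) hs0.le))
  have hfs : Compat.cwip d W (fun i => (1 - s) • ρ i + s • Compat.Itup d i)
      = (1 - s) * f + s := by
    rw [cwip_right_combo, hnW1, ← hfdef]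
    ring
  have hgs : Compat.cwip d W' (fun i => (1 - s) • ρ i + s • Compat.Itup d i)
      = (1 - s) * g + s := by
    rw [cwip_right_combo, hnW'1, ← hgdef]
    ring
  have hWneg : Compat.cwip d W (fun i => (1 - s) • ρ i + s • Compat.Itup d i) < 0 := by
    rw [hfs]
    have h5 := (lt_div_iff₀ h1f).mp hs2
    linarith
  have hres := hF _ hpos hWneg
  rw [hgs] at hres
  have h6 := (div_lt_iff₀ h1g).mp hs1
  linarith

lemma claimC {W W' : Compat.Tuple d} (hF : Compat.Finer d W' W)
    {σ τ : Compat.Tuple d} (hσ : Compat.PosTuple d σ) (hτ : Compat.PosTuple d τ)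
    (hfτ : Compat.cwip d W τ < 0) (hgτ : Compat.cwip d W' τ < 0)
    (hgσ : 0 < Compat.cwip d W' σ) :
    Compat.cwip d W σ * Compat.cwip d W' τ ≤ Compat.cwip d W τ * Compat.cwip d W' σ := by
  by_contra hcon
  push_neg at hcon
  have hfσ : 0 ≤ Compat.cwip d W σ := by
    by_contra h
    push_neg at h
    exact absurd (hF σ hσ h) (not_lt.mpr hgσ.le)
  set f1 := Compat.cwip d W σ with hf1
  set g1 := Compat.cwip d W' σ with hg1
  set f2 := Compat.cwip d W τ with hf2
  set g2 := Compat.cwip d W' τ with hg2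
  have hf2' : (0:ℝ) < -f2 := by linarith
  have hg2' : (0:ℝ) < -g2 := by linarith
  have hlt : f1 / (-f2) < g1 / (-g2) := by
    rw [div_lt_div_iff₀ hf2' hg2']
    nlinarith
  set t : ℝ := (f1 / (-f2) + g1 / (-g2)) / 2 with htdef
  have ht1 : f1 / (-f2) < t := by rw [htdef]; linarith
  have ht2 : t < g1 / (-g2) := by rw [htdef]; linarith
  have ht0 : 0 ≤ t := le_trans (div_nonneg hfσ hf2'.le) ht1.le
  have hpos : Compat.PosTuple d (fun i => (1:ℝ) • σ i + t • τ i) :=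
    fun i => ((posSemidef_real_smul (hσ i) zero_le_one).add (posSemidef_real_smul (hτ i) ht0))
  have hfs : Compat.cwip d W (fun i => (1:ℝ) • σ i + t • τ i) = f1 + t * f2 := by
    rw [cwip_right_combo, ← hf1, ← hf2]
    ring
  have hgs : Compat.cwip d W' (fun i => (1:ℝ) • σ i + t • τ i) = g1 + t * g2 := by
    rw [cwip_right_combo, ← hg1, ← hg2]
    ring
  have hWneg : Compat.cwip d W (fun i => (1:ℝ) • σ i + t • τ i) < 0 := by
    rw [hfs]
    have h5 := (div_lt_iff₀ hf2').mp ht1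
    linarith
  have hres := hF _ hpos hWneg
  rw [hgs] at hres
  have h6 := (lt_div_iff₀ hg2').mp ht2
  linarith

end

end Helpers

/-- for normalized witnesses `W, W'` with `D_W ≠ ∅`, `W'` is finer than
`W` iff `W = (1−ε)W' + εP` for some `ε ∈ [0,1)` and `P ∈ O` pairing nonnegatively with
every positive tuple. -/
theorem finer_iff_decomposition {n : ℕ} (d : Fin n → ℕ) (hn : 2 ≤ n) (hd : ∀ i, 1 ≤ d i)
    (W W' : Compat.Tuple d) (hW : Compat.IsWitness d W) (hW' : Compat.IsWitness d W')
    (hnW : Compat.Normalized d W) (hnW' : Compat.Normalized d W')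
    (hDW : ∃ σ, Compat.PosTuple d σ ∧ Compat.cwip d W σ < 0) :
    Compat.Finer d W' W ↔
      ∃ ε : ℝ, ε ∈ Set.Ico (0 : ℝ) 1 ∧ ∃ P : Compat.Tuple d, Compat.IsHermTuple d P ∧
        (∀ σ, Compat.PosTuple d σ → 0 ≤ Compat.cwip d P σ) ∧
        W = fun i => (1 - ε) • W' i + ε • P i := by
  have hnW1 : Compat.cwip d W (Compat.Itup d) = 1 := hnW
  have hnW'1 : Compat.cwip d W' (Compat.Itup d) = 1 := hnW'
  constructor
  · intro hF
    obtain ⟨τ₀, hτ₀, hfτ₀⟩ := hDW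
    set Sset : Set ℝ :=
      {t | ∃ σ, Compat.PosTuple d σ ∧ Compat.cwip d W σ < 0 ∧
        t = Compat.cwip d W σ / Compat.cwip d W' σ} with hSset
    have hmem₀ : Compat.cwip d W τ₀ / Compat.cwip d W' τ₀ ∈ Sset := ⟨τ₀, hτ₀, hfτ₀, rfl⟩
    have hne : Sset.Nonempty := ⟨_, hmem₀⟩
    have hub : ∀ x ∈ Sset, x ≤ 1 := by
      rintro x ⟨σ, hσ, hf, rfl⟩
      have hgle := claimA hd hF hnW hnW' hσ hf
      have hg0 : Compat.cwip d W' σ < 0 := lt_of_le_of_lt hgle hf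
      rw [div_le_iff_of_neg hg0, one_mul]
      exact hgle
    have hbdd : BddAbove Sset := ⟨1, hub⟩
    set c := sSup Sset with hcdef
    have hc1 : c ≤ 1 := csSup_le hne hub
    have hgτ₀ : Compat.cwip d W' τ₀ < 0 := hF τ₀ hτ₀ hfτ₀
    have hcpos : 0 < c :=
      lt_of_lt_of_le (div_pos_of_neg_of_neg hfτ₀ hgτ₀) (le_csSup hbdd hmem₀)
    have hB : ∀ σ, Compat.PosTuple d σ → c * Compat.cwip d W' σ ≤ Compat.cwip d W σ := by
      intro σ hσ
      rcases lt_trichotomy (Compat.cwip d W' σ) 0 with hg | hg | hg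
      · rcases le_or_gt 0 (Compat.cwip d W σ) with hf | hf
        · nlinarith
        · have hle := le_csSup hbdd (⟨σ, hσ, hf, rfl⟩ :
            Compat.cwip d W σ / Compat.cwip d W' σ ∈ Sset)
          have h2 : c * Compat.cwip d W' σ
              ≤ (Compat.cwip d W σ / Compat.cwip d W' σ) * Compat.cwip d W' σ :=
            mul_le_mul_of_nonpos_right hle hg.le
          rwa [div_mul_cancel₀ _ (ne_of_lt hg)] at h2
      · rw [hg, mul_zero]
        by_contra hcon
        push_neg at hcon
        have := hF σ hσ hcon
        rw [hg] at this
        exact lt_irrefl 0 this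
      · have hfg : ∀ x ∈ Sset, x ≤ Compat.cwip d W σ / Compat.cwip d W' σ := by
          rintro x ⟨τ, hτ, hfτ, rfl⟩
          have hgτ : Compat.cwip d W' τ < 0 := hF τ hτ hfτ
          have hkey := claimC hF hσ hτ hfτ hgτ hg
          rw [le_div_iff₀ hg, div_mul_eq_mul_div, div_le_iff_of_neg hgτ]
          linarith
        have hcle : c ≤ Compat.cwip d W σ / Compat.cwip d W' σ := csSup_le hne hfg
        calc c * Compat.cwip d W' σ
            ≤ (Compat.cwip d W σ / Compat.cwip d W' σ) * Compat.cwip d W' σ :=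
              mul_le_mul_of_nonneg_right hcle hg.le
          _ = Compat.cwip d W σ := div_mul_cancel₀ _ (ne_of_gt hg)
    rcases lt_or_ge c 1 with hclt | hcge
    · -- case c < 1
      have hne1 : (1:ℝ) - c ≠ 0 := by linarith
      have hinv : (0:ℝ) < (1 - c)⁻¹ := by
        apply inv_pos.mpr
        linarith
      refine ⟨1 - c, ⟨by linarith, by linarith⟩,
        fun i => (1 - c)⁻¹ • W i + (-((1 - c)⁻¹ * c)) • W' i, ?_, ?_, ?_⟩
      · intro i
        exact (isHermitian_real_smul _ (hW.1 i)).add (isHermitian_real_smul _ (hW'.1 i))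
      · intro σ hσ
        rw [cwip_left_combo]
        have h2 : (1 - c)⁻¹ * (c * Compat.cwip d W' σ) ≤ (1 - c)⁻¹ * Compat.cwip d W σ :=
          mul_le_mul_of_nonneg_left (hB σ hσ) hinv.le
        nlinarith
      · funext i
        show W i = (1 - (1 - c)) • W' i
          + (1 - c) • ((1 - c)⁻¹ • W i + (-((1 - c)⁻¹ * c)) • W' i)
        rw [smul_add, smul_smul, smul_smul]
        have s1 : (1 - c) * (1 - c)⁻¹ = 1 := mul_inv_cancel₀ hne1
        have s2 : (1 - c) * -((1 - c)⁻¹ * c) = -c := by field_simp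
        have s3 : 1 - (1 - c) = c := by ring
        rw [s1, s2, s3, one_smul, neg_smul]
        abel
    · -- case 1 ≤ c : then W = W'
      have hherm : Compat.IsHermTuple d (fun i => (1:ℝ) • W i + (-1:ℝ) • W' i) := fun i =>
        (isHermitian_real_smul _ (hW.1 i)).add (isHermitian_real_smul _ (hW'.1 i))
      have hpair : ∀ σ, Compat.PosTuple d σ →
          0 ≤ Compat.cwip d (fun i => (1:ℝ) • W i + (-1:ℝ) • W' i) σ := by
        intro σ hσ
        rw [cwip_left_combo]
        rcases le_or_gt (Compat.cwip d W' σ) 0 with hg | hg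
        · rcases le_or_gt 0 (Compat.cwip d W σ) with hf | hf
          · linarith
          · have := claimA hd hF hnW hnW' hσ hf
            linarith
        · have := hB σ hσ
          nlinarith
      obtain ⟨t, ht0, htp⟩ := pert_tuple (by omega : 0 < n) hd _ hherm
      have h1 : 0 ≤ Compat.cwip d (fun i => (1:ℝ) • W i + (-1:ℝ) • W' i)
          (fun i => (1:ℝ) • Compat.Itup d i
            + (-t) • ((fun i => (1:ℝ) • W i + (-1:ℝ) • W' i) i)) :=
        hpair _ (htp (-t) (by rw [abs_neg, abs_of_pos ht0]))
      rw [cwip_right_combo] at h1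
      have hI0 : Compat.cwip d (fun i => (1:ℝ) • W i + (-1:ℝ) • W' i) (Compat.Itup d) = 0 := by
        rw [cwip_left_combo, hnW1, hnW'1]
        ring
      rw [hI0] at h1
      have hself := cwip_self_nonneg _ hherm
      have hzero : Compat.cwip d (fun i => (1:ℝ) • W i + (-1:ℝ) • W' i)
          (fun i => (1:ℝ) • W i + (-1:ℝ) • W' i) = 0 := by
        nlinarith
      have hcomp := eq_zero_of_cwip_self _ hherm hzero
      have hWW' : W = W' := by
        funext i
        have h5 := hcomp i
        have h6 : W i - W' i = 0 := by
          simpa [one_smul, neg_one_smul, sub_eq_add_neg] using h5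
        exact sub_eq_zero.mp h6
      refine ⟨0, ⟨le_refl 0, by norm_num⟩, fun i => 0, fun i => Matrix.isHermitian_zero,
        ?_, ?_⟩
      · intro σ hσ
        rw [cwip_zero_left]
      · funext i
        rw [hWW']
        simp
  · rintro ⟨ε, ⟨hε0, hε1⟩, P, hPh, hPpos, hWeq⟩
    intro σ hσ hfσ
    rw [hWeq, cwip_left_combo] at hfσ
    have hp := hPpos σ hσ
    nlinarith
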